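/- For every function f : {0,1}^d → ℝ there exists a Boolean function h : {0,1}^d → {0,1}, given by a threshold of f (i.e., there is m ∈ ℝ with either h(x) = 1 iff f(x) > m, or h(x) = 1 iff f(x) ≥ m), such that: (1) dist(h, const) ≥ dist(f, const) / 2; and (2) for every pair of points x, y ∈ {0,1}^d differing in exactly one coordinate, if h(x) > h(y) then f(x) > f(y); consequently I_h(x) ≤ I_f(x) for every x ∈ {0,1}^d. -/
import Mathlib

/-- Undirected hypercube adjacency: `x` and `y` differ in exactly one coordinate. -/
def Adj {d : ℕ} (x y : Fin d → Bool) : Prop :=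
  ∃ i : Fin d, x i ≠ y i ∧ ∀ j : Fin d, j ≠ i → x j = y j

/-- `I_f(x)`: the number of influential edges `{x,y}` incident on `x`
with `f x > f y` (so each influential edge is counted at exactly one endpoint). -/
noncomputable def undirI (d : ℕ) (f : (Fin d → Bool) → ℝ) (x : Fin d → Bool) : ℕ :=
  Nat.card {y : Fin d → Bool // Adj x y ∧ f x > f y}

/-- Distance of `f` to the nearest constant function. -/
noncomputable def distConst (d : ℕ) (f : (Fin d → Bool) → ℝ) : ℝ :=
  ((sInf {n : ℕ | ∃ c : ℝ, n = Nat.card {x : Fin d → Bool // f x ≠ c}} : ℕ) : ℝ) / 2 ^ d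

open Finset

private lemma card_sub_mono {α : Type*} [Fintype α] {p q : α → Prop}
    (h : ∀ x, p x → q x) : Nat.card {x // p x} ≤ Nat.card {x // q x} := by
  classical
  rw [Nat.card_eq_fintype_card, Nat.card_eq_fintype_card]
  exact Fintype.card_subtype_mono p q h

private lemma natCard_filter {α : Type*} [Fintype α] (p : α → Prop) [DecidablePred p] :
    Nat.card {x // p x} = (Finset.univ.filter p).card := by
  rw [Nat.card_eq_fintype_card, Fintype.card_subtype]

private lemma natCard_compl {α : Type*} [Fintype α] (p : α → Prop) :
    Nat.card {x // p x} + Nat.card {x // ¬ p x} = Fintype.card α := by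
  classical
  rw [natCard_filter, natCard_filter, ← Finset.card_univ]
  exact Finset.card_filter_add_card_filter_not p

private lemma natCard_iff {α : Type*} [Fintype α] {p q : α → Prop} (h : ∀ x, p x ↔ q x) :
    Nat.card {x // p x} = Nat.card {x // q x} :=
  le_antisymm (card_sub_mono fun x hx => (h x).1 hx) (card_sub_mono fun x hx => (h x).2 hx)

private lemma key_ineq {α : Type*} [Fintype α] (P : α → Prop) [DecidablePred P] (k : ℕ)
    (h1 : k ≤ 2 * Nat.card {x // P x})
    (h2 : k ≤ 2 * Nat.card {x // ¬ P x}) (c : ℝ) :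
    k ≤ 2 * Nat.card {x : α // (if P x then (1:ℝ) else 0) ≠ c} := by
  by_cases hc : c = 1
  · subst hc
    have : Nat.card {x // ¬ P x} ≤ Nat.card {x : α // (if P x then (1:ℝ) else 0) ≠ 1} :=
      card_sub_mono (fun x hx => by simp [hx])
    omega
  · have : Nat.card {x // P x} ≤ Nat.card {x : α // (if P x then (1:ℝ) else 0) ≠ c} :=
      card_sub_mono (fun x hx => by simp [hx, Ne.symm hc])
    omega

private lemma main_aux (d : ℕ) (f : (Fin d → Bool) → ℝ) (P : (Fin d → Bool) → Prop)
    [DecidablePred P]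
    (hP : ∀ x y, P x → ¬ P y → f y < f x)
    (h1 : sInf {n : ℕ | ∃ c : ℝ, n = Nat.card {x : Fin d → Bool // f x ≠ c}}
        ≤ 2 * Nat.card {x // P x})
    (h2 : sInf {n : ℕ | ∃ c : ℝ, n = Nat.card {x : Fin d → Bool // f x ≠ c}}
        ≤ 2 * Nat.card {x // ¬ P x}) :
    distConst d (fun x => if P x then (1:ℝ) else 0) ≥ distConst d f / 2 ∧
    (∀ x y : Fin d → Bool, Adj x y →
      (if P x then (1:ℝ) else 0) > (if P y then (1:ℝ) else 0) → f x > f y) ∧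
    (∀ x : Fin d → Bool, undirI d (fun x => if P x then (1:ℝ) else 0) x ≤ undirI d f x) := by
  set h : (Fin d → Bool) → ℝ := fun x => if P x then (1:ℝ) else 0 with hh
  have mono : ∀ x y : Fin d → Bool, h x > h y → f x > f y := by
    intro x y hxy
    by_cases hx : P x <;> by_cases hy : P y <;>
      simp only [hh, hx, hy, if_pos, if_neg, not_false_iff] at hxy <;>
      first
        | exact hP x y hx hy
        | norm_num at hxy
  refine ⟨?_, fun x y _ => mono x y, fun x => card_sub_mono
      (fun y hy => ⟨hy.1, mono x y hy.2⟩)⟩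
  -- distance bound
  have hne : ({n : ℕ | ∃ c : ℝ, n = Nat.card {x : Fin d → Bool // h x ≠ c}}).Nonempty :=
    ⟨Nat.card {x : Fin d → Bool // h x ≠ 0}, 0, rfl⟩
  obtain ⟨c, hc⟩ := Nat.sInf_mem hne
  have hkey : sInf {n : ℕ | ∃ c : ℝ, n = Nat.card {x : Fin d → Bool // f x ≠ c}}
      ≤ 2 * sInf {n : ℕ | ∃ c : ℝ, n = Nat.card {x : Fin d → Bool // h x ≠ c}} := by
    rw [hc]; exact key_ineq P _ h1 h2 c
  unfold distConst
  rw [ge_iff_le, div_div, div_le_div_iff₀ (by positivity) (by positivity)]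
  have : ((sInf {n : ℕ | ∃ c : ℝ, n = Nat.card {x : Fin d → Bool // f x ≠ c}} : ℕ) : ℝ)
      ≤ 2 * ((sInf {n : ℕ | ∃ c : ℝ, n = Nat.card {x : Fin d → Bool // h x ≠ c}} : ℕ) : ℝ) := by
    exact_mod_cast hkey
  nlinarith [pow_pos (by norm_num : (0:ℝ) < 2) d]

/-- Every real-valued `f` on the hypercube admits a Boolean threshold function `h`
with `dist(h, const) ≥ dist(f, const)/2` whose influential edges (counted by `I_h`)
are among those of `f`. -/
theorem threshold_function_exists (d : ℕ) (hd : 1 ≤ d) (f : (Fin d → Bool) → ℝ) :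
    ∃ h : (Fin d → Bool) → ℝ, ∃ m : ℝ,
      ((∀ x, h x = if m < f x then 1 else 0) ∨
       (∀ x, h x = if m ≤ f x then 1 else 0)) ∧
      distConst d h ≥ distConst d f / 2 ∧
      (∀ x y : Fin d → Bool, Adj x y → h x > h y → f x > f y) ∧
      (∀ x : Fin d → Bool, undirI d h x ≤ undirI d f x) := by
  classical
  set k := sInf {n : ℕ | ∃ c : ℝ, n = Nat.card {x : Fin d → Bool // f x ≠ c}} with hk
  set N := Fintype.card (Fin d → Bool) with hNdef
  have hkle : ∀ c : ℝ, k ≤ Nat.card {x : Fin d → Bool // f x ≠ c} := by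
    intro c; exact Nat.sInf_le ⟨c, rfl⟩
  -- median construction
  have hne : (univ : Finset (Fin d → Bool)).Nonempty := univ_nonempty
  set s := univ.image f with hs_def
  have hs : s.Nonempty := hne.image f
  set T := s.filter (fun t => N ≤ 2 * Nat.card {x : Fin d → Bool // f x ≤ t}) with hT_def
  have hT : T.Nonempty := by
    refine ⟨s.max' hs, mem_filter.2 ⟨s.max'_mem hs, ?_⟩⟩
    have h0 : Nat.card {x : Fin d → Bool // ¬ f x ≤ s.max' hs} = 0 := by
      have : IsEmpty {x : Fin d → Bool // ¬ f x ≤ s.max' hs} :=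
        ⟨fun ⟨x, hx⟩ => hx (s.le_max' (f x) (mem_image_of_mem f (mem_univ x)))⟩
      exact Nat.card_of_isEmpty
    have hc := natCard_compl (fun x : Fin d → Bool => f x ≤ s.max' hs)
    omega
  set m := T.min' hT with hm_def
  have hmT : m ∈ T := T.min'_mem hT
  have hm1 : N ≤ 2 * Nat.card {x : Fin d → Bool // f x ≤ m} := (mem_filter.1 hmT).2
  have hm2 : 2 * Nat.card {x : Fin d → Bool // f x < m} ≤ N := by
    by_contra hcon
    push_neg at hcon
    have hpos : 0 < Nat.card {x : Fin d → Bool // f x < m} := by omega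
    obtain ⟨⟨x1, hx1⟩⟩ := (Nat.card_pos_iff.mp hpos).1
    have hne' : (univ.filter (fun x => f x < m)).Nonempty :=
      ⟨x1, mem_filter.2 ⟨mem_univ x1, hx1⟩⟩
    have hs' : ((univ.filter (fun x => f x < m)).image f).Nonempty := hne'.image f
    obtain ⟨x0, hx0, hfx0⟩ :=
      mem_image.1 (((univ.filter (fun x => f x < m)).image f).max'_mem hs')
    set t := ((univ.filter (fun x => f x < m)).image f).max' hs' with ht_def
    have ht_lt : t < m := by
      rw [← hfx0]; exact (mem_filter.1 hx0).2
    have htT : t ∈ T := by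
      refine mem_filter.2 ⟨?_, ?_⟩
      · rw [hs_def, ← hfx0]; exact mem_image_of_mem f (mem_univ x0)
      · have hle : Nat.card {x : Fin d → Bool // f x < m}
            ≤ Nat.card {x : Fin d → Bool // f x ≤ t} := by
          refine card_sub_mono (fun x hx => ?_)
          exact Finset.le_max' _ (f x) (mem_image_of_mem f (mem_filter.2 ⟨mem_univ x, hx⟩))
        omega
    have := T.min'_le t htT
    linarith
  -- count comparisons
  have hkAB : k ≤ Nat.card {x : Fin d → Bool // m < f x}
      + Nat.card {x : Fin d → Bool // f x < m} := by
    have h1 : Nat.card {x : Fin d → Bool // f x ≠ m}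
        ≤ Nat.card {x : Fin d → Bool // m < f x} + Nat.card {x : Fin d → Bool // f x < m} := by
      rw [natCard_filter (fun x : Fin d → Bool => f x ≠ m),
        natCard_filter (fun x : Fin d → Bool => m < f x),
        natCard_filter (fun x : Fin d → Bool => f x < m)]
      refine le_trans (Finset.card_le_card ?_) (Finset.card_union_le _ _)
      intro x hx
      simp only [mem_filter, mem_univ, true_and, mem_union] at hx ⊢
      exact (lt_or_gt_of_ne hx).symm
    exact (hkle m).trans h1
  have hA2N : 2 * Nat.card {x : Fin d → Bool // m < f x} ≤ N := by
    have hc1 := natCard_compl (fun x : Fin d → Bool => f x ≤ m)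
    have he : Nat.card {x : Fin d → Bool // ¬ f x ≤ m}
        = Nat.card {x : Fin d → Bool // m < f x} := natCard_iff (fun x => not_le)
    omega
  rcases le_or_gt (Nat.card {x : Fin d → Bool // f x < m})
      (Nat.card {x : Fin d → Bool // m < f x}) with hcase | hcase
  · -- strict threshold
    have h1 : k ≤ 2 * Nat.card {x : Fin d → Bool // m < f x} := by omega
    have h2 : k ≤ 2 * Nat.card {x : Fin d → Bool // ¬ m < f x} := by
      have hc2 := natCard_compl (fun x : Fin d → Bool => m < f x)
      omega
    obtain ⟨hdist, hmono, hI⟩ := main_aux d f (fun x => m < f x)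
      (fun x y hx hy => lt_of_le_of_lt (not_lt.1 hy) hx) h1 h2
    exact ⟨_, m, Or.inl (fun x => by by_cases hx : m < f x <;> simp [hx]), hdist, hmono, hI⟩
  · -- non-strict threshold
    have hc3 := natCard_compl (fun x : Fin d → Bool => f x < m)
    have he3 : Nat.card {x : Fin d → Bool // ¬ f x < m}
        = Nat.card {x : Fin d → Bool // m ≤ f x} := natCard_iff (fun x => not_lt)
    have he4 : Nat.card {x : Fin d → Bool // ¬ m ≤ f x}
        = Nat.card {x : Fin d → Bool // f x < m} := natCard_iff (fun x => not_le)
    have h1 : k ≤ 2 * Nat.card {x : Fin d → Bool // m ≤ f x} := by omega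
    have h2 : k ≤ 2 * Nat.card {x : Fin d → Bool // ¬ m ≤ f x} := by omega
    obtain ⟨hdist, hmono, hI⟩ := main_aux d f (fun x => m ≤ f x)
      (fun x y hx hy => lt_of_lt_of_le (not_le.1 hy) hx) h1 h2
    exact ⟨_, m, Or.inr (fun x => by by_cases hx : m ≤ f x <;> simp [hx]), hdist, hmono, hI⟩
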